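/- Every good configuration on the d-dimensional hypercube Q^d is coverable; that is, if C is a configuration on Q^d with nonempty support σ(C) and |C| ≥ 3^d − |σ(C)| + 1, then C is coverable. -/

import Mathlib

open Finset

/-- A pebbling step on graph `G`: remove two pebbles from a vertex `u`,
place one pebble on an adjacent vertex `v`. -/
def PebbleStep {V : Type*} (G : SimpleGraph V) (C C' : V → ℕ) : Prop :=
  ∃ u v : V, G.Adj u v ∧ 2 ≤ C u ∧ C' u = C u - 2 ∧ C' v = C v + 1 ∧
    ∀ x : V, x ≠ u → x ≠ v → C' x = C x

/-- A configuration is coverable if after some sequence of pebbling steps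
every vertex has at least one pebble. -/
def Coverable {V : Type*} (G : SimpleGraph V) (C : V → ℕ) : Prop :=
  ∃ C' : V → ℕ, Relation.ReflTransGen (PebbleStep G) C C' ∧ ∀ v : V, 1 ≤ C' v

/-- The `d`-dimensional hypercube: vertices are binary `d`-tuples, adjacent
exactly when they differ in one coordinate. -/
def cube (d : ℕ) : SimpleGraph (Fin d → Bool) where
  Adj x y := hammingDist x y = 1
  symm := ⟨fun (x y : Fin d → Bool) (h : hammingDist x y = 1) => by show hammingDist y x = 1; rwa [hammingDist_comm]⟩
  loopless := ⟨fun x (h : hammingDist x x = 1) => by simp [hammingDist_self] at h⟩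

/-!
Write `weight C = |C| + |σ(C)|`. Since `|σ(C)| ≤ 2^d ≤ 3^d`, a configuration on `Q^d` is good
exactly when `3^d + 1 ≤ weight C`, and such configurations are coverable by induction on `d`.
Split `Q^(d+1)` along the first coordinate into two copies of `Q^d`; the weight is additive. If
both halves have weight above `3^d`, cover them separately. Otherwise one half `B` has weight at
most `3^d`, so the other half `A` has weight at least `2·3^d + 1`, and pebbles are moved from `A`
to `B` along the matching edges. A move across a column costs `A` two or three units of weight and
gives `B` one or two. Taking first the moves that trade two units for two, then those that empty
a vertex of `A` holding two pebbles, then the others, brings both halves above `3^d`.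
-/

namespace Pebbling

open Relation

variable {V W ι : Type*}

section Additivity

variable [DecidableEq V] {G : SimpleGraph V}

theorem pebbleStep_iff {C C' : V → ℕ} :
    PebbleStep G C C' ↔
      ∃ u v, ∃ D : V → ℕ, G.Adj u v ∧ C = D + Pi.single u 2 ∧ C' = D + Pi.single v 1 := by
  constructor
  · rintro ⟨u, v, huv, hu, hu', hv', hrest⟩
    refine ⟨u, v, Function.update C' v (C v), huv, funext fun x => ?_, funext fun x => ?_⟩
    · by_cases hxu : x = u
      · subst hxu; simp [huv.ne, hu']; omega
      by_cases hxv : x = v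
      · subst hxv; simp [hxu]
      · simp [hxu, hxv, hrest x hxu hxv]
    · by_cases hxv : x = v
      · subst hxv; simp [hv']
      · simp [hxv]
  · rintro ⟨u, v, D, huv, rfl, rfl⟩
    exact ⟨u, v, huv, by simp, by simp [huv.ne'], by simp [huv.ne], fun x hu hv => by simp [hu, hv]⟩

theorem pebbleStep_add_single {u v : V} (h : G.Adj u v) (D : V → ℕ) :
    PebbleStep G (D + Pi.single u 2) (D + Pi.single v 1) :=
  pebbleStep_iff.2 ⟨u, v, D, h, rfl, rfl⟩

theorem PebbleStep.add_right {C C' : V → ℕ} (h : PebbleStep G C C') (E : V → ℕ) :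
    PebbleStep G (C + E) (C' + E) := by
  obtain ⟨u, v, D, huv, rfl, rfl⟩ := pebbleStep_iff.1 h
  exact pebbleStep_iff.2 ⟨u, v, D + E, huv, add_right_comm _ _ _, add_right_comm _ _ _⟩

theorem reflTransGen_add {C₁ C₁' C₂ C₂' : V → ℕ} (h₁ : ReflTransGen (PebbleStep G) C₁ C₁')
    (h₂ : ReflTransGen (PebbleStep G) C₂ C₂') :
    ReflTransGen (PebbleStep G) (C₁ + C₂) (C₁' + C₂') := by
  have h₁' := ReflTransGen.lift (· + C₂) (fun _ _ h => PebbleStep.add_right h C₂) _ _ h₁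
  have h₂' := ReflTransGen.lift (C₁' + ·)
    (fun _ _ h => by simpa only [add_comm C₁'] using PebbleStep.add_right h C₁') _ _ h₂
  exact h₁'.trans h₂'

theorem reflTransGen_sum (s : Finset ι) {f g : ι → V → ℕ}
    (h : ∀ i ∈ s, ReflTransGen (PebbleStep G) (f i) (g i)) :
    ReflTransGen (PebbleStep G) (∑ i ∈ s, f i) (∑ i ∈ s, g i) := by
  induction s using Finset.cons_induction with
  | empty => exact .refl
  | cons a s ha ih =>
    rw [sum_cons, sum_cons]
    exact reflTransGen_add (h a (mem_cons_self a s)) (ih fun i hi => h i (mem_cons_of_mem hi))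

theorem reflTransGen_single_two_mul {u v : V} (h : G.Adj u v) (k : ℕ) :
    ReflTransGen (PebbleStep G) (Pi.single u (2 * k)) (Pi.single v k) := by
  induction k with
  | zero => simp only [mul_zero, Pi.single_zero]; exact .refl
  | succ k ih =>
    rw [mul_add, mul_one, Pi.single_add, Pi.single_add (f := fun _ => ℕ) v k 1]
    exact (reflTransGen_add ih .refl).tail (pebbleStep_add_single h _)

end Additivity

section Pushforward

variable [Fintype V] [DecidableEq W]

def pushforward (f : V → W) (C : V → ℕ) : W → ℕ :=
  ∑ v, Pi.single (f v) (C v)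

theorem pushforward_add (f : V → W) (C D : V → ℕ) :
    pushforward f (C + D) = pushforward f C + pushforward f D := by
  simp only [pushforward, Pi.add_apply, Pi.single_add, sum_add_distrib]

theorem pushforward_single [DecidableEq V] (f : V → W) (u : V) (k : ℕ) :
    pushforward f (Pi.single u k) = Pi.single (f u) k := by
  rw [pushforward, sum_eq_single u (fun v _ hv => by simp [hv]) (by simp)]
  simp

theorem le_pushforward_apply (f : V → W) (C : V → ℕ) (v : V) : C v ≤ pushforward f C (f v) := by
  rw [pushforward, Finset.sum_apply]
  refine le_trans ?_ (single_le_sum (fun _ _ => Nat.zero_le _) (mem_univ v))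
  simp

variable [DecidableEq V] {G : SimpleGraph V} {H : SimpleGraph W}

theorem PebbleStep.pushforward (φ : G →g H) {C C' : V → ℕ} (h : PebbleStep G C C') :
    PebbleStep H (pushforward φ C) (pushforward φ C') := by
  obtain ⟨u, v, D, huv, rfl, rfl⟩ := pebbleStep_iff.1 h
  rw [pushforward_add, pushforward_add, pushforward_single, pushforward_single]
  exact pebbleStep_add_single (φ.map_adj huv) _

theorem reflTransGen_pushforward (φ : G →g H) {C C' : V → ℕ}
    (h : ReflTransGen (PebbleStep G) C C') :
    ReflTransGen (PebbleStep H) (pushforward φ C) (pushforward φ C') :=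
  ReflTransGen.lift (pushforward φ) (fun _ _ => PebbleStep.pushforward φ) _ _ h

end Pushforward

theorem reflTransGen_pushforward_two_smul [Fintype ι] [DecidableEq V] {G : SimpleGraph V}
    (i j : ι → V) (h : ∀ x, G.Adj (i x) (j x)) (f : ι → ℕ) :
    ReflTransGen (PebbleStep G) (pushforward i (2 • f)) (pushforward j f) :=
  reflTransGen_sum _ fun x _ => by simpa using reflTransGen_single_two_mul (h x) (f x)

def vertexWeight (n : ℕ) : ℕ := n + min n 1

def weight [Fintype V] (C : V → ℕ) : ℕ := ∑ v, vertexWeight (C v)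

theorem weight_eq_sum_add_card [Fintype V] (C : V → ℕ) :
    weight C = ∑ v, C v + #{v | 0 < C v} := by
  rw [weight, card_filter, ← sum_add_distrib]
  refine sum_congr rfl fun v _ => ?_
  unfold vertexWeight
  split_ifs <;> omega

theorem weight_eq_zero_or_two_le [Fintype V] (C : V → ℕ) : weight C = 0 ∨ 2 ≤ weight C := by
  by_cases h : ∃ v, 0 < C v
  · obtain ⟨v, hv⟩ := h
    right
    calc 2 ≤ vertexWeight (C v) := by unfold vertexWeight; omega
      _ ≤ weight C := single_le_sum (f := fun v => vertexWeight (C v)) (fun _ _ => Nat.zero_le _)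
          (mem_univ v)
  · push Not at h
    left
    exact sum_eq_zero fun v _ => by simp [vertexWeight, Nat.le_zero.mp (h v)]

theorem exists_le_sum_eq [Fintype ι] {g : ι → ℕ} {t : ℕ} (ht : t ≤ ∑ i, g i) :
    ∃ f ≤ g, ∑ i, f i = t := by
  classical
  induction t with
  | zero => exact ⟨0, fun _ => Nat.zero_le _, by simp⟩
  | succ t ih =>
    obtain ⟨f, hfg, rfl⟩ := ih (by omega)
    obtain ⟨i, hi⟩ : ∃ i, f i < g i := by
      by_contra! h
      have := sum_le_sum fun i (_ : i ∈ univ) => h i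
      omega
    refine ⟨f + Pi.single i 1, fun j => ?_, by simp [sum_add_distrib]⟩
    by_cases hj : j = i
    · subst hj; simpa using hi
    · simpa [hj] using hfg j

section Transfer

/- Moves across a column with `m` pebbles on the source and `n` on the target, sorted by their
effect on the weights of the two halves: one move `(-2, +2)` if `3 ≤ m` and `n = 0`, one move
`(-3, +2)` emptying the source if `m = 2` and `n = 0`, and the remaining moves that keep the source
occupied, `(-2, +1)` each (`(m - 1) / 2` such moves in all). -/
def losslessMoves (m n : ℕ) : ℕ := if 3 ≤ m ∧ n = 0 then 1 else 0

def emptyingMoves (m n : ℕ) : ℕ := if m = 2 ∧ n = 0 then 1 else 0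

def spareMoves (m n : ℕ) : ℕ := (m - 1) / 2 - losslessMoves m n

theorem vertexWeight_transfer {m n f₁ f₂ f₃ : ℕ} (h₁ : f₁ ≤ losslessMoves m n)
    (h₂ : f₂ ≤ emptyingMoves m n) (h₃ : f₃ ≤ spareMoves m n) :
    2 * (f₁ + f₂ + f₃) ≤ m ∧
      vertexWeight m ≤ vertexWeight (m - 2 * (f₁ + f₂ + f₃)) + 2 * (f₁ + f₂ + f₃) + f₂ ∧
      vertexWeight n + (f₁ + f₂ + f₃) + f₁ + f₂ ≤ vertexWeight (n + (f₁ + f₂ + f₃)) := by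
  unfold spareMoves at h₃
  unfold vertexWeight losslessMoves emptyingMoves at *
  split_ifs at * <;> omega

theorem vertexWeight_add_le_capacity (m n : ℕ) :
    vertexWeight m + vertexWeight n + (if m = 1 then 0 else 1) ≤
      2 * (vertexWeight n + 2 * losslessMoves m n + 2 * emptyingMoves m n + spareMoves m n) + 2 := by
  unfold spareMoves vertexWeight losslessMoves emptyingMoves
  split_ifs <;> omega

theorem exists_transfer_amounts {N a w y x t : ℕ} (hN : Odd N) (htot : 3 * N + 1 ≤ a + w)
    (hw : w ≤ N) (hw' : (w = 0 ∧ 1 ≤ y) ∨ 2 ≤ w) (hcap : N + 1 ≤ w + 2 * y + 2 * x + t) :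
    ∃ y₁ ≤ y, ∃ x₁ ≤ x, ∃ t₁ ≤ t,
      N + 1 ≤ w + (y₁ + x₁ + t₁) + y₁ + x₁ ∧ N + 1 + 2 * (y₁ + x₁ + t₁) + x₁ ≤ a := by
  have hN' := Nat.odd_iff.mp hN
  by_cases h₁ : N + 1 ≤ w + 2 * y
  · exact ⟨(N + 2 - w) / 2, by omega, 0, by omega, 0, by omega, by omega, by omega⟩
  by_cases h₂ : N + 1 ≤ w + 2 * y + 2 * x
  · exact ⟨y, le_rfl, (N + 2 - w - 2 * y) / 2, by omega, 0, by omega, by omega, by omega⟩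
  · exact ⟨y, le_rfl, x, le_rfl, N + 1 - w - 2 * y - 2 * x, by omega, by omega, by omega⟩

variable [Fintype ι] {N : ℕ} {c b : ι → ℕ}

/- Summing `vertexWeight_add_le_capacity`, a shortfall forces `c = 1` everywhere, and then
`weight c = 2 * card ι` is too small. -/
theorem le_capacity (hι : 2 * Fintype.card ι ≤ N + 1) (htot : 3 * N + 1 ≤ weight c + weight b)
    (hb : weight b ≤ N) :
    N + 1 ≤ weight b + 2 * ∑ i, losslessMoves (c i) (b i) + 2 * ∑ i, emptyingMoves (c i) (b i) +
      ∑ i, spareMoves (c i) (b i) := by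
  by_contra! hlt
  have hsum := sum_le_sum fun i (_ : i ∈ univ) => vertexWeight_add_le_capacity (c i) (b i)
  simp only [sum_add_distrib, ← mul_sum, sum_const, card_univ, smul_eq_mul] at hsum
  have hone : ∀ i, c i = 1 := by
    have h0 : ∑ i, (if c i = 1 then 0 else 1) = 0 := by
      unfold weight at htot hlt; omega
    intro i
    have := (sum_eq_zero_iff.mp h0) i (mem_univ i)
    split_ifs at this with h
    exact h
  have hc : weight c = 2 * Fintype.card ι := by
    simp [weight, hone, vertexWeight, mul_comm]
  omega

theorem one_le_sum_losslessMoves (hb : weight b = 0) (hc : 3 * Fintype.card ι < weight c) :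
    1 ≤ ∑ i, losslessMoves (c i) (b i) := by
  by_contra! h
  have hb0 : ∀ i, b i = 0 := fun i => by
    have := (sum_eq_zero_iff.mp hb) i (mem_univ i)
    unfold vertexWeight at this; omega
  have hle : ∀ i, vertexWeight (c i) ≤ 3 := fun i => by
    have := (sum_eq_zero_iff.mp (Nat.lt_one_iff.mp h)) i (mem_univ i)
    have := hb0 i
    unfold losslessMoves at *
    unfold vertexWeight
    split_ifs at *
    omega
  have := sum_le_sum fun i (_ : i ∈ univ) => hle i
  simp only [sum_const, card_univ, smul_eq_mul] at this
  unfold weight at hc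
  omega

theorem exists_balancing_transfer (hN : Odd N) (hι : 2 * Fintype.card ι ≤ N + 1)
    (htot : 3 * N + 1 ≤ weight c + weight b) (hb : weight b ≤ N) :
    ∃ e, 2 • e ≤ c ∧ N + 1 ≤ weight (c - 2 • e) ∧ N + 1 ≤ weight (b + e) := by
  have hN' := Nat.odd_iff.mp hN
  obtain ⟨y₁, hy₁, x₁, hx₁, t₁, ht₁, hgain, hloss⟩ := exists_transfer_amounts hN htot hb
    (by
      rcases weight_eq_zero_or_two_le b with h0 | h2
      · exact Or.inl ⟨h0, one_le_sum_losslessMoves h0 (by omega)⟩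
      · exact Or.inr h2)
    (le_capacity hι htot hb)
  obtain ⟨f₁, hf₁, rfl⟩ := exists_le_sum_eq hy₁
  obtain ⟨f₂, hf₂, rfl⟩ := exists_le_sum_eq hx₁
  obtain ⟨f₃, hf₃, rfl⟩ := exists_le_sum_eq ht₁
  have hv := fun i => vertexWeight_transfer (hf₁ i) (hf₂ i) (hf₃ i)
  refine ⟨f₁ + f₂ + f₃, fun i => by simpa using (hv i).1, ?_, ?_⟩
  · have hsum : weight c ≤ weight (c - 2 • (f₁ + f₂ + f₃)) +
        2 * (∑ i, f₁ i + ∑ i, f₂ i + ∑ i, f₃ i) + ∑ i, f₂ i := by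
      refine (sum_le_sum fun i (_ : i ∈ univ) => (hv i).2.1).trans_eq ?_
      simp only [weight, Pi.sub_apply, Pi.smul_apply, Pi.add_apply, smul_eq_mul,
        sum_add_distrib, ← mul_sum]
    omega
  · have hsum : weight b + (∑ i, f₁ i + ∑ i, f₂ i + ∑ i, f₃ i) + ∑ i, f₁ i + ∑ i, f₂ i ≤
        weight (b + (f₁ + f₂ + f₃)) := by
      refine le_of_eq_of_le ?_ (sum_le_sum fun i (_ : i ∈ univ) => (hv i).2.2)
      simp [weight, sum_add_distrib]
    omega

end Transfer

section Cube

variable {d : ℕ}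

theorem hammingDist_cons {β : Type*} [DecidableEq β] (a a' : β) (x y : Fin d → β) :
    hammingDist (Fin.cons a x : Fin (d + 1) → β) (Fin.cons a' y) =
      (if a = a' then 0 else 1) + hammingDist x y := by
  simp only [hammingDist, card_filter, Fin.sum_univ_succ, Fin.cons_zero, Fin.cons_succ]
  by_cases h : a = a' <;> simp [h]

def consHom (s : Bool) : cube d →g cube (d + 1) where
  toFun x := Fin.cons s x
  map_rel' {x y} (h : hammingDist x y = 1) := by
    show hammingDist _ _ = 1
    rw [hammingDist_cons, h, if_pos rfl]

@[simp]
theorem consHom_apply (s : Bool) (x : Fin d → Bool) : consHom s x = Fin.cons s x :=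
  rfl

theorem cube_adj_cons_not (s : Bool) (x : Fin d → Bool) :
    (cube (d + 1)).Adj (consHom s x) (consHom (!s) x) := by
  show hammingDist _ _ = 1
  simp [hammingDist_cons]

theorem sum_cube_succ {M : Type*} [AddCommMonoid M] (s : Bool) (f : (Fin (d + 1) → Bool) → M) :
    ∑ z, f z = ∑ x, f (consHom s x) + ∑ x, f (consHom (!s) x) := by
  rw [← (Fin.consEquiv fun _ => Bool).sum_comp, Fintype.sum_prod_type, Fintype.sum_bool]
  cases s
  · exact add_comm _ _
  · rfl

theorem eq_pushforward_add_pushforward (s : Bool) (C : (Fin (d + 1) → Bool) → ℕ) :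
    C = pushforward (consHom s) (C ∘ consHom s) +
      pushforward (consHom (!s)) (C ∘ consHom (!s)) := by
  conv_lhs => rw [← univ_sum_single C]
  exact sum_cube_succ s _

theorem weight_cube_succ (s : Bool) (C : (Fin (d + 1) → Bool) → ℕ) :
    weight C = weight (C ∘ consHom s) + weight (C ∘ consHom (!s)) :=
  sum_cube_succ s _

theorem coverable_pushforward_add_pushforward (s : Bool) {c b : (Fin d → Bool) → ℕ}
    (hc : Coverable (cube d) c) (hb : Coverable (cube d) b) :
    Coverable (cube (d + 1)) (pushforward (consHom s) c + pushforward (consHom (!s)) b) := by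
  obtain ⟨c', hcc', hc'⟩ := hc
  obtain ⟨b', hbb', hb'⟩ := hb
  refine ⟨_, reflTransGen_add (reflTransGen_pushforward _ hcc') (reflTransGen_pushforward _ hbb'),
    fun z => ?_⟩
  obtain ⟨t, x, rfl⟩ : ∃ t x, consHom t x = z := ⟨z 0, Fin.tail z, Fin.cons_self_tail z⟩
  rw [Pi.add_apply]
  obtain rfl | rfl : t = s ∨ t = !s := by cases s <;> cases t <;> simp
  · exact le_add_right ((hc' x).trans (le_pushforward_apply _ _ x))
  · exact le_add_left ((hb' x).trans (le_pushforward_apply _ _ x))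

theorem reflTransGen_transfer (s : Bool) {c b e : (Fin d → Bool) → ℕ} (he : 2 • e ≤ c) :
    ReflTransGen (PebbleStep (cube (d + 1)))
      (pushforward (consHom s) c + pushforward (consHom (!s)) b)
      (pushforward (consHom s) (c - 2 • e) + pushforward (consHom (!s)) (b + e)) := by
  have hmove := reflTransGen_pushforward_two_smul _ _ (cube_adj_cons_not s) e
  convert reflTransGen_add (reflTransGen_add .refl hmove) .refl using 1
  · rw [← pushforward_add, tsub_add_cancel_of_le he]
  · rw [pushforward_add]
    abel

theorem two_mul_two_pow_le_three_pow_add_one (d : ℕ) : 2 * 2 ^ d ≤ 3 ^ d + 1 := by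
  induction d with
  | zero => simp
  | succ d ih =>
    have := Nat.one_le_pow d 3 (by norm_num)
    rw [pow_succ, pow_succ]
    omega

theorem exists_balanced_pebbling {C : (Fin (d + 1) → Bool) → ℕ} (h : 3 ^ (d + 1) + 1 ≤ weight C) :
    ∃ s c b, ReflTransGen (PebbleStep (cube (d + 1))) C
        (pushforward (consHom s) c + pushforward (consHom (!s)) b) ∧
      3 ^ d + 1 ≤ weight c ∧ 3 ^ d + 1 ≤ weight b := by
  by_cases hsmall : ∃ s, weight (C ∘ consHom (!s)) ≤ 3 ^ d
  · obtain ⟨s, hs⟩ := hsmall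
    have hsplit := weight_cube_succ s C
    obtain ⟨e, he, hc, hb⟩ := exists_balancing_transfer (c := C ∘ consHom s)
      (Odd.pow (by decide : Odd 3)) (by simpa using two_mul_two_pow_le_three_pow_add_one d)
      (by rw [pow_succ] at h; omega) hs
    have htransfer := reflTransGen_transfer s (b := C ∘ consHom (!s)) he
    rw [← eq_pushforward_add_pushforward] at htransfer
    exact ⟨s, _, _, htransfer, hc, hb⟩
  · push Not at hsmall
    exact ⟨false, _, _, eq_pushforward_add_pushforward false C ▸ .refl, hsmall true, hsmall false⟩

theorem coverable_of_weight : ∀ {d : ℕ} {C : (Fin d → Bool) → ℕ},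
    3 ^ d + 1 ≤ weight C → Coverable (cube d) C
  | 0, C, h => by
    refine ⟨C, .refl, fun v => ?_⟩
    rw [weight, Fintype.sum_subsingleton _ v, vertexWeight] at h
    omega
  | d + 1, C, h => by
    obtain ⟨s, c, b, hC, hc, hb⟩ := exists_balanced_pebbling h
    obtain ⟨C', hC', hcover⟩ :=
      coverable_pushforward_add_pushforward s (coverable_of_weight hc) (coverable_of_weight hb)
    exact ⟨C', hC.trans hC', hcover⟩

end Cube

end Pebbling

theorem good_configuration_coverable_general (d : ℕ) (C : (Fin d → Bool) → ℕ)
    (hgood : 3 ^ d - (Finset.univ.filter fun x => 0 < C x).card + 1 ≤ ∑ v, C v) :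
    Coverable (cube d) C := by
  have hcard : (Finset.univ.filter fun x => 0 < C x).card ≤ 3 ^ d :=
    calc _ ≤ #(univ : Finset (Fin d → Bool)) := card_filter_le _ _
      _ = 2 ^ d := by simp
      _ ≤ 3 ^ d := Nat.pow_le_pow_left (by norm_num) d
  apply Pebbling.coverable_of_weight
  rw [Pebbling.weight_eq_sum_add_card]
  omega

/-- Every good configuration on `Q^d` is coverable: if `C` has nonempty support
and `|C| ≥ 3^d − |σ(C)| + 1`, then `C` is coverable. -/
theorem good_configuration_coverable (d : ℕ) (C : (Fin d → Bool) → ℕ)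
    (hne : (Finset.univ.filter fun x => 0 < C x).Nonempty)
    (hgood : 3 ^ d - (Finset.univ.filter fun x => 0 < C x).card + 1 ≤ ∑ v, C v) :
    Coverable (cube d) C :=
  good_configuration_coverable_general d C hgood
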